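/- Soundness of the abstraction for condition PC1: let (S, P) be a finite DTMC, h : S → Ŝ a surjective abstraction function, and E ⊆ S an h-saturated effect set with abstract effect Ê = h(E). If the limit of the minimum value iteration of the induced abstract MDP with target Ê is strictly positive at h(s), i.e., ⨆ₙ minreach n (h s) > 0, then the concrete probability of eventually reaching E from s is strictly positive, i.e., Preach s > 0; in particular E is graph-reachable from s in the concrete DTMC. -/

import Mathlib

open scoped Classical

/-- Concretization of an abstract state: `γ(t) = h⁻¹({t})`, as a finset. -/
noncomputable def gammaSet {S T : Type*} [Fintype S] (h : S → T) (t : T) : Finset S :=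
  Finset.univ.filter fun s => h s = t

/-- The concretization of every abstract state is nonempty when `h` is surjective. -/
theorem gammaSet_nonempty {S T : Type*} [Fintype S] (h : S → T)
    (hsurj : Function.Surjective h) (t : T) : (gammaSet h t).Nonempty := by
  obtain ⟨s, hs⟩ := hsurj t
  exact ⟨s, by simp [gammaSet, hs]⟩

/-- Abstract transition function of the induced abstract MDP:
`P̂ ŝ α ŝ' = ∑_{s' ∈ γ(ŝ')} P α s'`. -/
noncomputable def absP {S T : Type*} [Fintype S] (P : S → S → ℝ) (h : S → T)
    (α : S) (t' : T) : ℝ :=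
  ∑ s' ∈ gammaSet h t', P α s'

/-- Minimum value iteration of the induced abstract MDP (state space `T`, actions
`S`, enabled actions `Act(t) = γ(t)`) for an abstract target set `Eh`. -/
noncomputable def absMinReach {S T : Type*} [Fintype S] [Fintype T]
    (P : S → S → ℝ) (h : S → T) (hsurj : Function.Surjective h) (Eh : Set T) :
    ℕ → T → ℝ
  | 0, t => if t ∈ Eh then 1 else 0
  | n + 1, t =>
      if t ∈ Eh then 1
      else (gammaSet h t).inf' (gammaSet_nonempty h hsurj t) fun α =>
        ∑ t' : T, absP P h α t' * absMinReach P h hsurj Eh n t'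

/-- n-step reachability values of a target set `E` in the concrete DTMC. -/
noncomputable def reachN {S : Type*} [Fintype S] (P : S → S → ℝ) (E : Set S) :
    ℕ → S → ℝ
  | 0, s => if s ∈ E then 1 else 0
  | n + 1, s => if s ∈ E then 1 else ∑ s' : S, P s s' * reachN P E n s'

/-- `E` is graph-reachable from `s`. -/
def GraphReach {S : Type*} (P : S → S → ℝ) (E : Set S) (s : S) : Prop :=
  ∃ t ∈ E, Relation.ReflTransGen (fun a b => 0 < P a b) s t

/-! The abstract minimum value iteration is a step-by-step lower bound for the concrete one:
the action `s` is enabled in `h s`, so the minimum at `h s` is at most the value of playing `s`,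
and the abstract transition from `s` merely groups the concrete successors of `s` by their
`h`-classes; `h`-saturation of `E` makes both iterations agree on which states are targets.
A positive finite-horizon value then forces a path of positive transitions into `E`. -/

theorem GraphReach.of_mem {S : Type*} {P : S → S → ℝ} {E : Set S} {s : S} (hs : s ∈ E) :
    GraphReach P E s :=
  ⟨s, hs, .refl⟩

theorem GraphReach.head {S : Type*} {P : S → S → ℝ} {E : Set S} {s s' : S} (hstep : 0 < P s s')
    (hreach : GraphReach P E s') : GraphReach P E s :=
  let ⟨t, ht, hpath⟩ := hreach
  ⟨t, ht, .head hstep hpath⟩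

section Abstraction

variable {S T : Type*} [Fintype S]

theorem mem_gammaSet_self (h : S → T) (s : S) : s ∈ gammaSet h (h s) := by
  simp [gammaSet]

theorem sum_absP_mul [Fintype T] (P : S → S → ℝ) (h : S → T) (α : S) (f : T → ℝ) :
    ∑ t, absP P h α t * f t = ∑ s, P α s * f (h s) := by
  rw [← Finset.sum_fiberwise Finset.univ h]
  refine Finset.sum_congr rfl fun t _ => ?_
  rw [absP, gammaSet, Finset.sum_mul]
  exact Finset.sum_congr rfl fun s hs => by rw [(Finset.mem_filter.mp hs).2]

theorem absMinReach_le_reachN [Fintype T] (P : S → S → ℝ) (hP : ∀ s s', 0 ≤ P s s')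
    (h : S → T) (hsurj : Function.Surjective h) {E : Set S} (hsat : E = h ⁻¹' (h '' E))
    (n : ℕ) (s : S) : absMinReach P h hsurj (h '' E) n (h s) ≤ reachN P E n s := by
  have hmem : ∀ s, h s ∈ h '' E ↔ s ∈ E := fun s => (Set.ext_iff.mp hsat s).symm
  induction n generalizing s with
  | zero => simp only [absMinReach, reachN, hmem, le_refl]
  | succ n ih =>
    simp only [absMinReach, reachN, hmem]
    split_ifs
    · rfl
    · calc _ ≤ ∑ t, absP P h s t * absMinReach P h hsurj (h '' E) n t :=
            Finset.inf'_le _ (mem_gammaSet_self h s)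
        _ = ∑ s', P s s' * absMinReach P h hsurj (h '' E) n (h s') := sum_absP_mul P h s _
        _ ≤ ∑ s', P s s' * reachN P E n s' :=
            Finset.sum_le_sum fun s' _ => mul_le_mul_of_nonneg_left (ih s') (hP s s')

end Abstraction

section Reachability

variable {S : Type*} [Fintype S]

theorem reachN_le_one (P : S → S → ℝ) (hP : ∀ s s', 0 ≤ P s s')
    (hsum : ∀ s, ∑ s', P s s' ≤ 1) (E : Set S) (n : ℕ) (s : S) : reachN P E n s ≤ 1 := by
  induction n generalizing s with
  | zero => simp only [reachN]; split_ifs <;> norm_num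
  | succ n ih =>
    simp only [reachN]
    split_ifs
    · rfl
    · calc ∑ s', P s s' * reachN P E n s' ≤ ∑ s', P s s' :=
            Finset.sum_le_sum fun s' _ => mul_le_of_le_one_right (hP s s') (ih s')
        _ ≤ 1 := hsum s

theorem bddAbove_range_reachN (P : S → S → ℝ) (hP : ∀ s s', 0 ≤ P s s')
    (hsum : ∀ s, ∑ s', P s s' ≤ 1) (E : Set S) (s : S) :
    BddAbove (Set.range fun n => reachN P E n s) :=
  ⟨1, Set.forall_mem_range.mpr fun n => reachN_le_one P hP hsum E n s⟩

theorem graphReach_of_reachN_pos (P : S → S → ℝ) (hP : ∀ s s', 0 ≤ P s s') (E : Set S)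
    (n : ℕ) (s : S) (hpos : 0 < reachN P E n s) : GraphReach P E s := by
  induction n generalizing s with
  | zero =>
    by_cases hs : s ∈ E
    · exact .of_mem hs
    · simp [reachN, hs] at hpos
  | succ n ih =>
    by_cases hs : s ∈ E
    · exact .of_mem hs
    rw [reachN, if_neg hs] at hpos
    obtain ⟨s', -, hterm⟩ := Finset.exists_lt_of_sum_lt (f := fun _ => (0 : ℝ))
      (by simpa only [Finset.sum_const_zero] using hpos)
    obtain ⟨hstep, hnext⟩ | ⟨hstep, -⟩ := mul_pos_iff.mp hterm
    · exact .head hstep (ih s' hnext)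
    · exact absurd hstep (hP s s').not_gt

end Reachability

theorem abstraction_sound_PC1_general {S T : Type*}
    [Fintype S] [Fintype T]
    (P : S → S → ℝ)
    (hP : ∀ s s' : S, 0 ≤ P s s')
    (hsum : ∀ s : S, ∑ s' : S, P s s' = 1)
    (h : S → T) (hsurj : Function.Surjective h)
    (E : Set S) (hsat : E = h ⁻¹' (h '' E))
    (s : S)
    (hpos : 0 < ⨆ n : ℕ, absMinReach P h hsurj (h '' E) n (h s)) :
    0 < (⨆ n : ℕ, reachN P E n s) ∧ GraphReach P E s := by
  obtain ⟨n, hn⟩ := exists_lt_of_lt_ciSup hpos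
  have hreach : 0 < reachN P E n s := hn.trans_le (absMinReach_le_reachN P hP h hsurj hsat n s)
  have hbdd := bddAbove_range_reachN P hP (fun s => (hsum s).le) E s
  exact ⟨hreach.trans_le (le_ciSup hbdd n), graphReach_of_reachN_pos P hP E n s hreach⟩

/-- Soundness of the abstraction for condition PC1: let (S, P) be a
finite DTMC, h : S → Ŝ a surjective abstraction function, and E ⊆ S an h-saturated
effect set with abstract effect Ê = h(E). If the limit of the minimum value
iteration of the induced abstract MDP with target Ê is strictly positive at h(s),
then the concrete probability of eventually reaching E from s is strictly positive;
in particular E is graph-reachable from s in the concrete DTMC. -/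
theorem abstraction_sound_PC1 {S T : Type*}
    [Fintype S] [Nonempty S] [Fintype T]
    (P : S → S → ℝ)
    (hP : ∀ s s' : S, 0 ≤ P s s')
    (hsum : ∀ s : S, ∑ s' : S, P s s' = 1)
    (h : S → T) (hsurj : Function.Surjective h)
    (E : Set S) (hsat : E = h ⁻¹' (h '' E))
    (s : S)
    (hpos : 0 < ⨆ n : ℕ, absMinReach P h hsurj (h '' E) n (h s)) :
    0 < (⨆ n : ℕ, reachN P E n s) ∧ GraphReach P E s :=
  abstraction_sound_PC1_general P hP hsum h hsurj E hsat s hpos
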